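/- Let α ∈ {+,−} and let G be a sharp α-semiradial with root r, with linear ground H. Then the contraction G/H is a round α-radial with sublinear root h, where h is the contracted vertex corresponding to V(H). -/

import Mathlib

/-- A bidirected graph on vertex type `V`: each edge has two ends (`fst`, `snd`),
each carrying a sign (`true` = `+`, `false` = `-`). Loops are edges with `fst = snd`. -/
structure BG (V : Type) where
  E : Type
  fst : E → V
  snd : E → V
  s1 : E → Bool
  s2 : E → Bool

namespace BG

variable {V : Type}

/-- A step is a traversal of an edge in one of the two directions. -/
abbrev Step (G : BG V) : Type := G.E × Bool

variable (G : BG V)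

def src (st : G.Step) : V := if st.2 then G.fst st.1 else G.snd st.1
def tgt (st : G.Step) : V := if st.2 then G.snd st.1 else G.fst st.1
/-- sign of the edge at the source end of the step -/
def ssign (st : G.Step) : Bool := if st.2 then G.s1 st.1 else G.s2 st.1
/-- sign of the edge at the target end of the step -/
def tsign (st : G.Step) : Bool := if st.2 then G.s2 st.1 else G.s1 st.1

/-- `p` is a ditrail from `x` to `y`: an edge-simple walk such that at each internal
vertex the sign of the entering edge-end and the sign of the leaving edge-end are opposite. -/
def IsDitrail (p : List G.Step) (x y : V) : Prop :=
  (p.map Prod.fst).Nodup ∧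
  List.Chain' (fun a b => G.tgt a = G.src b ∧ G.tsign a = !G.ssign b) p ∧
  (∀ st, p.head? = some st → G.src st = x) ∧
  (∀ st, p.getLast? = some st → G.tgt st = y) ∧
  (p = [] → x = y)

/-- There is an `(α, β)`-ditrail from `x` to `y` using only edges from `Es` and avoiding
the vertex set `A`.  The trivial (empty) ditrail from `x` to `x` counts as an
`(!β, β)`-ditrail for each `β`. -/
def ReachWA (Es : Set G.E) (A : Set V) (α β : Bool) (x y : V) : Prop :=
  ∃ p : List G.Step, G.IsDitrail p x y ∧ (∀ st ∈ p, st.1 ∈ Es) ∧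
    x ∉ A ∧ (∀ st ∈ p, G.tgt st ∉ A) ∧
    (p.head?.map G.ssign).getD (!β) = α ∧ (p.getLast?.map G.tsign).getD β = β

/-- There is an `(α, β)`-ditrail from `x` to `y` using only edges from `Es`. -/
def ReachW (Es : Set G.E) (α β : Bool) (x y : V) : Prop := G.ReachWA Es ∅ α β x y

/-- There is an `(α, β)`-ditrail from `x` to `y` in `G`. -/
def Reach (α β : Bool) (x y : V) : Prop := G.ReachW Set.univ α β x y

/-- There is an `α`-ditrail from `x` to `y` in `G` (only the starting sign is constrained). -/
def ReachS (α : Bool) (x y : V) : Prop := ∃ β, G.Reach α β x y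

/-- There is an `α`-ditrail from `x` to `y` using only edges from `Es`. -/
def ReachWS (Es : Set G.E) (α : Bool) (x y : V) : Prop := ∃ β, G.ReachW Es α β x y

def Adj (u v : V) : Prop :=
  ∃ e : G.E, (G.fst e = u ∧ G.snd e = v) ∨ (G.fst e = v ∧ G.snd e = u)

/-- `G` is an `α`-radial with root `r`. -/
def IsRadial (α : Bool) (r : V) : Prop := ∀ v, G.Reach α (!α) v r
/-- `G` is an `α`-semiradial with root `r`. -/
def IsSemiradial (α : Bool) (r : V) : Prop := ∀ v, G.ReachS α v r

/-- `x` is an (`α`-)strong vertex with respect to `r`. -/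
def StrongVtx (α : Bool) (r x : V) : Prop :=
  G.Reach α (!α) x r ∧ G.Reach (!α) (!α) x r
/-- `x` is a sublinear vertex with respect to `r`. -/
def SublinearVtx (α : Bool) (r x : V) : Prop :=
  G.Reach α (!α) x r ∧ ¬ G.Reach (!α) (!α) x r
/-- `x` is an absolute vertex with respect to `r`. -/
def AbsoluteVtx (r x : V) : Prop := ∀ α : Bool, G.ReachS α x r
/-- `x` is an `α`-linear vertex with respect to `r`. -/
def LinearVtx (α : Bool) (r x : V) : Prop := G.ReachS α x r ∧ ¬ G.ReachS (!α) x r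

/-- sharpness at the root: every neighbor of `r` is linear. -/
def SharpAt (α : Bool) (r : V) : Prop := ∀ v, G.Adj v r → G.LinearVtx α r v

/-- `v` is joined to `r` by an edge whose end at `r` has sign `!α`. -/
def OppNbr (α : Bool) (r v : V) : Prop :=
  ∃ e : G.E, (G.fst e = r ∧ G.snd e = v ∧ G.s1 e = !α) ∨
    (G.snd e = r ∧ G.fst e = v ∧ G.s2 e = !α)

/-- roundness: every vertex joined to `r` by an edge whose end at `r` has sign `!α` is strong. -/
def RoundAt (α : Bool) (r : V) : Prop := ∀ v, G.OppNbr α r v → G.StrongVtx α r v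

/-- `e` is a cut edge of `S` whose end in `S` carries the sign `γ`. -/
def CutSign (S : Set V) (γ : Bool) (e : G.E) : Prop :=
  (G.fst e ∈ S ∧ G.snd e ∉ S ∧ G.s1 e = γ) ∨
  (G.snd e ∈ S ∧ G.fst e ∉ S ∧ G.s2 e = γ)

/-- edges of the subgraph of `G` induced by `S` -/
def inducedEdges (S : Set V) : Set G.E := {e | G.fst e ∈ S ∧ G.snd e ∈ S}

/-- a simple diear relative to `S`: a nonempty ditrail whose first and last vertices
lie in `S` and whose internal vertices avoid `S`. -/
def IsSimpleDiear (S : Set V) (p : List G.Step) : Prop :=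
  p ≠ [] ∧ ∃ u v, G.IsDitrail p u v ∧ u ∈ S ∧ v ∈ S ∧
    ∀ w ∈ p.dropLast.map G.tgt, w ∉ S

/-- a scoop diear relative to `S` with grip `e`: of the form `(y,e,x) + P` where `y ∈ S`,
`x ∉ S`, and `P` is a ditrail from `x` back to `y` ending with the reverse traversal of `e`,
whose internal vertices avoid `S`. -/
def IsScoopDiear (S : Set V) (e : G.E) (p : List G.Step) : Prop :=
  ∃ d q, p = (e, d) :: q ∧ G.src (e, d) ∈ S ∧ G.tgt (e, d) ∉ S ∧
    G.IsDitrail q (G.tgt (e, d)) (G.src (e, d)) ∧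
    q.getLast? = some (e, !d) ∧
    (∀ st, q.head? = some st → G.ssign st = !(G.tsign (e, d))) ∧
    ∀ w ∈ q.dropLast.map G.tgt, w ∉ S

/-- A subgraph of `G`. -/
structure Sub (G : BG V) where
  verts : Set V
  edges : Set G.E
  fst_mem : ∀ e ∈ edges, G.fst e ∈ verts
  snd_mem : ∀ e ∈ edges, G.snd e ∈ verts

variable {G}

def Sub.le (K L : G.Sub) : Prop := K.verts ⊆ L.verts ∧ K.edges ⊆ L.edges

def Sub.union (K L : G.Sub) : G.Sub where
  verts := K.verts ∪ L.verts
  edges := K.edges ∪ L.edges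
  fst_mem := fun e he => he.elim (fun h => Or.inl (K.fst_mem e h)) (fun h => Or.inr (L.fst_mem e h))
  snd_mem := fun e he => he.elim (fun h => Or.inl (K.snd_mem e h)) (fun h => Or.inr (L.snd_mem e h))

/-- the subgraph `K` is an `α`-semiradial with root `r`. -/
def Sub.IsSemiradial (K : G.Sub) (α : Bool) (r : V) : Prop :=
  r ∈ K.verts ∧ ∀ v ∈ K.verts, G.ReachWS K.edges α v r

/-- the subgraph `K` is an absolute semiradial with root `r`. -/
def Sub.IsAbsolute (K : G.Sub) (r : V) : Prop := ∀ α : Bool, K.IsSemiradial α r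

/-- the subgraph `K` is an `α`-radial with root `r`. -/
def Sub.IsRadial (K : G.Sub) (α : Bool) (r : V) : Prop :=
  r ∈ K.verts ∧ ∀ v ∈ K.verts, G.ReachW K.edges α (!α) v r

/-- the subgraph `K` is a strong `α`-radial with root `r`. -/
def Sub.IsStrong (K : G.Sub) (α : Bool) (r : V) : Prop :=
  K.IsRadial α r ∧ ∀ v ∈ K.verts, G.ReachW K.edges (!α) (!α) v r

/-- the subgraph `K` is an almost strong `α`-radial with root `r`. -/
def Sub.IsAlmostStrong (K : G.Sub) (α : Bool) (r : V) : Prop :=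
  K.IsRadial α r ∧ (∀ v ∈ K.verts, v ≠ r → G.ReachW K.edges (!α) (!α) v r) ∧
    ¬ G.ReachW K.edges (!α) (!α) r r

/-- the subgraph `K` is a linear `α`-semiradial with root `r`: no loop at `r`,
and no nontrivial `(!α)`-ditrail (within `K`) to `r`. -/
def Sub.IsLinearSR (K : G.Sub) (α : Bool) (r : V) : Prop :=
  K.IsSemiradial α r ∧ (¬ ∃ e ∈ K.edges, G.fst e = r ∧ G.snd e = r) ∧
    ∀ x p st, G.IsDitrail p x r → (∀ st' ∈ p, st'.1 ∈ K.edges) →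
      p.head? = some st → G.ssign st = α

/-- candidate for the linear ground: a linear `α`-semiradial with root `r`
all of whose non-root vertices are linear in `G`. -/
def Sub.IsLinearGroundCand (K : G.Sub) (α : Bool) (r : V) : Prop :=
  K.IsLinearSR α r ∧ ∀ v ∈ K.verts, v ≠ r → G.LinearVtx α r v

/-- candidate for the extended ground over the almost strong ground `H`. -/
def Sub.IsExtCand (H K : G.Sub) (α : Bool) (r : V) : Prop :=
  H.le K ∧ K.IsRadial α r ∧ ∀ v ∈ K.verts, v ∉ H.verts → G.SublinearVtx α r v

/-- the first shell of the extended ground `I` over the almost strong ground `H`: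
shell vertices having an `(α,!α)`-ditrail to `r` within `I` avoiding `V(H) \ {r}`. -/
def firstShell (H I : G.Sub) (α : Bool) (r : V) : Set V :=
  {x | x ∈ I.verts ∧ x ∉ H.verts ∧ G.ReachWA I.edges (H.verts \ {r}) α (!α) x r}

/-- adding new edges to `G`: each `f : F` becomes an edge between `a f` and `b f`
with signs `sa f` and `sb f` at these ends. -/
def addE (G : BG V) {F : Type} (a b : F → V) (sa sb : F → Bool) : BG V where
  E := G.E ⊕ F
  fst := Sum.elim G.fst a
  snd := Sum.elim G.snd b
  s1 := Sum.elim G.s1 sa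
  s2 := Sum.elim G.s2 sb

/-- deleting the edges in `D` from `G`. -/
def delE (G : BG V) (D : Set G.E) : BG V where
  E := {e : G.E // e ∉ D}
  fst e := G.fst e.1
  snd e := G.snd e.1
  s1 e := G.s1 e.1
  s2 e := G.s2 e.1

/-- contracting the vertex set `S` of `G` to the single vertex `r` (deleting the
edges lying within `S`, i.e. the arising loops). -/
noncomputable def contract (G : BG V) (S : Set V) (r : V) : BG V where
  E := {e : G.E // ¬(G.fst e ∈ S ∧ G.snd e ∈ S)}
  fst e := @ite _ (G.fst e.1 ∈ S) (Classical.propDecidable _) r (G.fst e.1)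
  snd e := @ite _ (G.snd e.1 ∈ S) (Classical.propDecidable _) r (G.snd e.1)
  s1 e := G.s1 e.1
  s2 e := G.s2 e.1

/-- a gluing sum `(G; s) ⊕ (H; T)`: every edge-end of `G` at `s` is redirected
to some vertex of `H` (given by `f1`, `f2`), keeping all signs. -/
noncomputable def glue {VG VH : Type} (G : BG VG) (H : BG VH) (s : VG)
    (f1 f2 : G.E → VH) : BG (VG ⊕ VH) where
  E := G.E ⊕ H.E
  fst := Sum.elim
    (fun e => @ite _ (G.fst e = s) (Classical.propDecidable _)
      (Sum.inr (f1 e)) (Sum.inl (G.fst e)))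
    (fun e => Sum.inr (H.fst e))
  snd := Sum.elim
    (fun e => @ite _ (G.snd e = s) (Classical.propDecidable _)
      (Sum.inr (f2 e)) (Sum.inl (G.snd e)))
    (fun e => Sum.inr (H.snd e))
  s1 := Sum.elim G.s1 H.s1
  s2 := Sum.elim G.s2 H.s2

/-- the copy of `H` inside a gluing sum, as a subgraph. -/
noncomputable def glueHcopy {VG VH : Type} (G : BG VG) (H : BG VH) (s : VG)
    (f1 f2 : G.E → VH) : (glue G H s f1 f2).Sub where
  verts := Set.range Sum.inr
  edges := Set.range Sum.inr
  fst_mem := by rintro _ ⟨e, rfl⟩; exact ⟨H.fst e, rfl⟩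
  snd_mem := by rintro _ ⟨e, rfl⟩; exact ⟨H.snd e, rfl⟩

end BG

namespace List

set_option linter.deprecated false

@[simp] theorem chain'_nil {α : Type*} {R : α → α → Prop} : Chain' R [] := isChain_nil
@[simp] theorem chain'_singleton {α : Type*} {R : α → α → Prop} (a : α) : Chain' R [a] :=
  isChain_singleton a
theorem chain'_cons' {α : Type*} {R : α → α → Prop} {x : α} {l : List α} :
    Chain' R (x :: l) ↔ (∀ y ∈ head? l, R x y) ∧ Chain' R l := isChain_cons
theorem chain'_cons {α : Type*} {R : α → α → Prop} {x y : α} {l : List α} :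
    Chain' R (x :: y :: l) ↔ R x y ∧ Chain' R (y :: l) := isChain_cons_cons
theorem chain'_append {α : Type*} {R : α → α → Prop} {l₁ l₂ : List α} :
    Chain' R (l₁ ++ l₂) ↔ Chain' R l₁ ∧ Chain' R l₂ ∧
      ∀ x ∈ l₁.getLast?, ∀ y ∈ l₂.head?, R x y := isChain_append
theorem chain'_reverse {α : Type*} {R : α → α → Prop} {l : List α} :
    Chain' R l.reverse ↔ Chain' (fun a b => R b a) l := isChain_reverse
theorem chain'_map {α β : Type*} {R : α → α → Prop} (f : β → α) {l : List β} :
    Chain' R (map f l) ↔ Chain' (fun a b : β => R (f a) (f b)) l := isChain_map f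
theorem Chain'.suffix {α : Type*} {R : α → α → Prop} {l l₁ : List α} (h : Chain' R l)
    (h' : l₁ <:+ l) : Chain' R l₁ := IsChain.suffix h h'
theorem Chain'.prefix {α : Type*} {R : α → α → Prop} {l l₁ : List α} (h : Chain' R l)
    (h' : l₁ <+: l) : Chain' R l₁ := IsChain.prefix h h'
theorem Chain'.imp {α : Type*} {R S : α → α → Prop} (H : ∀ ⦃a b : α⦄, R a b → S a b)
    {l : List α} (p : Chain' R l) : Chain' S l := IsChain.imp H p

end List
namespace BG
variable {V : Type} {G : BG V}

@[simp] lemma src_flip (st : G.Step) : G.src (st.1, !st.2) = G.tgt st := by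
  rcases st with ⟨e, d⟩; cases d <;> simp [src, tgt]
@[simp] lemma tgt_flip (st : G.Step) : G.tgt (st.1, !st.2) = G.src st := by
  rcases st with ⟨e, d⟩; cases d <;> simp [src, tgt]
@[simp] lemma ssign_flip (st : G.Step) : G.ssign (st.1, !st.2) = G.tsign st := by
  rcases st with ⟨e, d⟩; cases d <;> simp [ssign, tsign]
@[simp] lemma tsign_flip (st : G.Step) : G.tsign (st.1, !st.2) = G.ssign st := by
  rcases st with ⟨e, d⟩; cases d <;> simp [ssign, tsign]

lemma src_mem_ends (st : G.Step) : G.src st = G.fst st.1 ∨ G.src st = G.snd st.1 := by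
  rcases st with ⟨e, d⟩; cases d <;> simp [src]
lemma tgt_mem_ends (st : G.Step) : G.tgt st = G.fst st.1 ∨ G.tgt st = G.snd st.1 := by
  rcases st with ⟨e, d⟩; cases d <;> simp [tgt]

lemma ditrail_nil (x : V) : G.IsDitrail [] x x := by
  refine ⟨by simp, by simp, by simp, by simp, fun _ => rfl⟩

lemma ditrail_singleton (st : G.Step) : G.IsDitrail [st] (G.src st) (G.tgt st) := by
  refine ⟨by simp, by simp, ?_, ?_, by simp⟩
  · intro st' h; simp only [List.head?_cons, Option.some.injEq] at h; rw [← h]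
  · intro st' h; simp only [List.getLast?_singleton, Option.some.injEq] at h; rw [← h]

lemma ditrail_cons {p : List G.Step} {y : V} (st : G.Step)
    (h : G.IsDitrail p (G.tgt st) y)
    (hnd : st.1 ∉ p.map Prod.fst)
    (hsg : ∀ st', p.head? = some st' → G.tsign st = !G.ssign st')
    (hnil : p = [] → G.tgt st = y) :
    G.IsDitrail (st :: p) (G.src st) y := by
  obtain ⟨h1, h2, h3, h4, h5⟩ := h
  refine ⟨by simp [h1, hnd], ?_, ?_, ?_, by simp⟩
  · rw [List.chain'_cons']
    refine ⟨fun st' hst' => ⟨(h3 st' hst').symm, hsg st' hst'⟩, h2⟩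
  · intro st' h'; simp only [List.head?_cons, Option.some.injEq] at h'; rw [← h']
  · intro st' h'
    cases p with
    | nil =>
      simp only [List.getLast?_singleton, Option.some.injEq] at h'
      rw [← h']; exact hnil rfl
    | cons a q => rw [List.getLast?_cons_cons] at h'; exact h4 st' h'

lemma ditrail_tail {st : G.Step} {p : List G.Step} {x y : V}
    (h : G.IsDitrail (st :: p) x y) (hne : p ≠ []) :
    G.IsDitrail p (G.tgt st) y ∧ ∀ st', p.head? = some st' → G.ssign st' = !G.tsign st := by
  obtain ⟨h1, h2, h3, h4, h5⟩ := h
  rw [List.chain'_cons'] at h2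
  obtain ⟨hrel, h2⟩ := h2
  obtain ⟨a, q, rfl⟩ : ∃ a q, p = a :: q := by cases p with
    | nil => exact absurd rfl hne
    | cons a q => exact ⟨a, q, rfl⟩
  have hra := hrel a rfl
  constructor
  · refine ⟨(List.nodup_cons.mp h1).2, h2, ?_, ?_, by simp⟩
    · intro st' h'; simp only [List.head?_cons, Option.some.injEq] at h'
      rw [← h']; exact hra.1.symm
    · intro st' h'; exact h4 st' (by rw [List.getLast?_cons_cons]; exact h')
  · intro st' h'; simp only [List.head?_cons, Option.some.injEq] at h'
    subst h'; rw [hra.2, Bool.not_not]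

def rev (p : List G.Step) : List G.Step := (p.map (fun st => (st.1, !st.2))).reverse

lemma rev_head? (p : List G.Step) :
    (rev p).head? = p.getLast?.map (fun st => (st.1, !st.2)) := by
  simp [rev, List.head?_reverse, List.getLast?_map]

lemma rev_getLast? (p : List G.Step) :
    (rev p).getLast? = p.head?.map (fun st => (st.1, !st.2)) := by
  simp [rev, List.getLast?_reverse, List.head?_map]

lemma rev_map_fst (p : List G.Step) :
    (rev p).map Prod.fst = (p.map Prod.fst).reverse := by
  rw [rev, List.map_reverse, List.map_map]; rfl

lemma ditrail_rev {p : List G.Step} {x y : V} (h : G.IsDitrail p x y) :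
    G.IsDitrail (rev p) y x := by
  obtain ⟨h1, h2, h3, h4, h5⟩ := h
  refine ⟨by rw [rev_map_fst]; exact List.nodup_reverse.mpr h1, ?_, ?_, ?_, ?_⟩
  · rw [rev, List.chain'_reverse, List.chain'_map]
    refine h2.imp ?_
    intro a b hab
    constructor
    · show G.tgt (b.1, !b.2) = G.src (a.1, !a.2)
      rw [tgt_flip, src_flip]; exact hab.1.symm
    · show G.tsign (b.1, !b.2) = !G.ssign (a.1, !a.2)
      rw [tsign_flip, ssign_flip, hab.2, Bool.not_not]
  · intro st h'
    rw [rev_head?] at h'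
    obtain ⟨st0, hst0, rfl⟩ := Option.map_eq_some_iff.mp h'
    rw [src_flip]; exact h4 st0 hst0
  · intro st h'
    rw [rev_getLast?] at h'
    obtain ⟨st0, hst0, rfl⟩ := Option.map_eq_some_iff.mp h'
    rw [tgt_flip]; exact h3 st0 hst0
  · intro h'
    have hp : p = [] := by
      rw [rev, List.reverse_eq_nil_iff, List.map_eq_nil_iff] at h'
      exact h'
    exact (h5 hp).symm

lemma ditrail_append {p q : List G.Step} {x y z : V}
    (hp : G.IsDitrail p x y) (hq : G.IsDitrail q y z)
    (hdisj : List.Disjoint (p.map Prod.fst) (q.map Prod.fst))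
    (hsg : ∀ a b, p.getLast? = some a → q.head? = some b → G.tsign a = !G.ssign b) :
    G.IsDitrail (p ++ q) x z := by
  obtain ⟨p1, p2, p3, p4, p5⟩ := hp
  obtain ⟨q1, q2, q3, q4, q5⟩ := hq
  refine ⟨?_, ?_, ?_, ?_, ?_⟩
  · rw [List.map_append, List.nodup_append]; exact ⟨p1, q1, List.disjoint_iff_ne.mp hdisj⟩
  · rw [List.chain'_append]
    refine ⟨p2, q2, ?_⟩
    intro a ha b hb
    exact ⟨(p4 a ha).trans (q3 b hb).symm, hsg a b ha hb⟩
  · intro st h'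
    rw [List.head?_append] at h'
    cases hp' : p.head? with
    | some a => rw [hp'] at h'; simp at h'; subst h'; exact p3 a hp'
    | none =>
      rw [hp'] at h'; simp at h'
      have hpnil : p = [] := List.head?_eq_none_iff.mp hp'
      rw [p5 hpnil]; exact q3 st h'
  · intro st h'
    rw [List.getLast?_append] at h'
    cases hq' : q.getLast? with
    | some a => rw [hq'] at h'; simp at h'; subst h'; exact q4 a hq'
    | none =>
      rw [hq'] at h'; simp at h'
      have hqnil : q = [] := List.getLast?_eq_none_iff.mp hq'
      rw [← q5 hqnil]; exact p4 st h'
  · intro h'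
    rw [List.append_eq_nil_iff] at h'
    rw [p5 h'.1, q5 h'.2]

lemma reach_intro {p : List G.Step} {x y : V} (hp : G.IsDitrail p x y) {sth stl : G.Step}
    (h1 : p.head? = some sth) (h2 : p.getLast? = some stl) :
    G.Reach (G.ssign sth) (G.tsign stl) x y := by
  refine ⟨p, hp, fun st _ => Set.mem_univ _, Set.notMem_empty x,
    fun st _ => Set.notMem_empty _, ?_, ?_⟩
  · rw [h1]; rfl
  · rw [h2]; rfl

lemma reachS_intro {p : List G.Step} {x y : V} (hp : G.IsDitrail p x y) {sth : G.Step}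
    (h1 : p.head? = some sth) : G.ReachS (G.ssign sth) x y := by
  have hne : p ≠ [] := by intro h; rw [h] at h1; simp at h1
  exact ⟨G.tsign (p.getLast hne), reach_intro hp h1 (List.getLast?_eq_getLast hne)⟩

lemma reach_nil (G' : BG V) (a : Bool) (x : V) : G'.Reach a (!a) x x := by
  refine ⟨[], ditrail_nil x, by simp, Set.notMem_empty x, by simp, by simp, by simp⟩

end BG

namespace BG
variable {V : Type} {G : BG V} {α : Bool} {r : V} {H : G.Sub}

@[simp] lemma src_true (e : G.E) : G.src (e, true) = G.fst e := by simp [src]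
@[simp] lemma src_false (e : G.E) : G.src (e, false) = G.snd e := by simp [src]
@[simp] lemma tgt_true (e : G.E) : G.tgt (e, true) = G.snd e := by simp [tgt]
@[simp] lemma tgt_false (e : G.E) : G.tgt (e, false) = G.fst e := by simp [tgt]
@[simp] lemma ssign_true (e : G.E) : G.ssign (e, true) = G.s1 e := by simp [ssign]
@[simp] lemma ssign_false (e : G.E) : G.ssign (e, false) = G.s2 e := by simp [ssign]
@[simp] lemma tsign_true (e : G.E) : G.tsign (e, true) = G.s2 e := by simp [tsign]
@[simp] lemma tsign_false (e : G.E) : G.tsign (e, false) = G.s1 e := by simp [tsign]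

lemma step_mem_verts {K : G.Sub} {st : G.Step} (h : st.1 ∈ K.edges) :
    G.src st ∈ K.verts ∧ G.tgt st ∈ K.verts := by
  rcases st with ⟨e, d⟩
  cases d
  · exact ⟨K.snd_mem e h, K.fst_mem e h⟩
  · exact ⟨K.fst_mem e h, K.snd_mem e h⟩

lemma fst_step (st : G.Step) : G.fst st.1 = G.src st ∨ G.fst st.1 = G.tgt st := by
  rcases st with ⟨e, d⟩; cases d <;> simp
lemma snd_step (st : G.Step) : G.snd st.1 = G.src st ∨ G.snd st.1 = G.tgt st := by
  rcases st with ⟨e, d⟩; cases d <;> simp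

lemma ditrail_nil_eq {x y : V} (h : G.IsDitrail [] x y) : x = y := h.2.2.2.2 rfl

lemma reachWS_intro {Es : Set G.E} {p : List G.Step} {x y : V} {sth : G.Step} {a : Bool}
    (hp : G.IsDitrail p x y) (he : ∀ st ∈ p, st.1 ∈ Es)
    (h1 : p.head? = some sth) (hs : G.ssign sth = a) : G.ReachWS Es a x y := by
  have hne : p ≠ [] := by intro h; rw [h] at h1; simp at h1
  refine ⟨G.tsign (p.getLast hne), p, hp, he, Set.notMem_empty x,
    fun st _ => Set.notMem_empty _, ?_, ?_⟩
  · rw [h1]; simpa using hs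
  · rw [List.getLast?_eq_getLast hne]; rfl

lemma reachWS_mono {Es Es' : Set G.E} {a : Bool} {x y : V} (h : Es ⊆ Es')
    (hr : G.ReachWS Es a x y) : G.ReachWS Es' a x y := by
  obtain ⟨β, p, hp, he, h3, h4, h5, h6⟩ := hr
  exact ⟨β, p, hp, fun st hst => h (he st hst), h3, h4, h5, h6⟩

/-- extract a ditrail within `H` from `u` to `r`, starting with sign `α` if nonempty -/
lemma hpath (hH : H.IsLinearGroundCand α r) {u : V} (hu : u ∈ H.verts) :
    ∃ p, G.IsDitrail p u r ∧ (∀ st ∈ p, st.1 ∈ H.edges) ∧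
      (∀ st, p.head? = some st → G.ssign st = α) := by
  obtain ⟨β, p, hd, he, -, -, hs, -⟩ := hH.1.1.2 u hu
  refine ⟨p, hd, he, fun st h => ?_⟩
  rw [h] at hs; simpa using hs

/-- Key extension lemma: a linear vertex outside `H` joined to `H` by an edge with
sign `α` at the outside end and (`!α` at the `H`-end, or the `H`-end being `r`)
contradicts maximality. -/
lemma M1 (hH : H.IsLinearGroundCand α r)
    (hmax : ∀ K : G.Sub, K.IsLinearGroundCand α r → K.le H)
    (s0 : G.Step) (hsrc : G.src s0 ∉ H.verts) (htgt : G.tgt s0 ∈ H.verts)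
    (hss : G.ssign s0 = α) (halt : G.tgt s0 = r ∨ G.tsign s0 = !α)
    (hlin : G.LinearVtx α r (G.src s0)) : False := by
  classical
  have hrS : r ∈ H.verts := hH.1.1.1
  have hvr : G.src s0 ≠ r := fun h => hsrc (h ▸ hrS)
  have hes : s0.1 ∉ H.edges := fun h => hsrc (step_mem_verts h).1
  set v := G.src s0 with hv
  set u := G.tgt s0 with hu
  set K : G.Sub := {
    verts := insert v H.verts
    edges := insert s0.1 H.edges
    fst_mem := by
      intro e he
      rcases Set.mem_insert_iff.mp he with rfl | he
      · rcases fst_step s0 with h | h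
        · rw [h]; exact Set.mem_insert _ _
        · rw [h]; exact Set.mem_insert_of_mem _ htgt
      · exact Set.mem_insert_of_mem _ (H.fst_mem e he)
    snd_mem := by
      intro e he
      rcases Set.mem_insert_iff.mp he with rfl | he
      · rcases snd_step s0 with h | h
        · rw [h]; exact Set.mem_insert _ _
        · rw [h]; exact Set.mem_insert_of_mem _ htgt
      · exact Set.mem_insert_of_mem _ (H.snd_mem e he) } with hK
  have hcand : K.IsLinearGroundCand α r := by
    refine ⟨⟨⟨Set.mem_insert_of_mem _ hrS, ?_⟩, ?_, ?_⟩, ?_⟩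
    · -- semiradiality
      intro w hw
      rcases Set.mem_insert_iff.mp hw with rfl | hwS
      · -- w = v
        by_cases hur : u = r
        · have hd : G.IsDitrail [s0] v r := by
            have h0 := ditrail_singleton (G := G) s0
            rwa [← hv, ← hu, hur] at h0
          refine reachWS_intro hd ?_ rfl hss
          intro st hst; simp at hst; subst hst; exact Set.mem_insert _ _
        · have hts : G.tsign s0 = !α := halt.resolve_left hur
          obtain ⟨q, hq, hqe, hqs⟩ := hpath hH htgt
          have hqne : q ≠ [] := by
            intro h; subst h; exact hur (ditrail_nil_eq hq)
          have hnd : s0.1 ∉ q.map Prod.fst := by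
            intro h; obtain ⟨st', hst', h'⟩ := List.mem_map.mp h
            exact hes (h' ▸ hqe st' hst')
          have hd : G.IsDitrail (s0 :: q) v r := by
            refine ditrail_cons s0 hq hnd ?_ (fun h => absurd h hqne)
            intro st' h'; rw [hts, hqs st' h']
          refine reachWS_intro hd ?_ rfl hss
          intro st hst
          rcases List.mem_cons.mp hst with rfl | hst
          · exact Set.mem_insert _ _
          · exact Set.mem_insert_of_mem _ (hqe st hst)
      · exact reachWS_mono (Set.subset_insert _ _) (hH.1.1.2 w hwS)
    · -- no loop at r
      rintro ⟨e, he, hf, hs'⟩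
      rcases Set.mem_insert_iff.mp he with rfl | he
      · rcases src_mem_ends s0 with h | h
        · exact hvr (by rw [hv, h, hf])
        · exact hvr (by rw [hv, h, hs'])
      · exact hH.1.2.1 ⟨e, he, hf, hs'⟩
    · -- linearity of trails to r
      intro x p st' hdit hedges hhead
      by_cases hmem : s0.1 ∈ p.map Prod.fst
      · obtain ⟨st0, hst0p, hfst⟩ := List.mem_map.mp hmem
        obtain ⟨p₁, p₂, rfl⟩ := List.append_of_mem hst0p
        obtain ⟨hnd, hch, hhd, hlast, -⟩ := hdit
        have hcases : st0 = s0 ∨ st0 = (s0.1, !s0.2) := by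
          rcases st0 with ⟨e0, d0⟩; rcases s0 with ⟨e1, d1⟩
          simp only at hfst; subst hfst
          cases d0 <;> cases d1 <;> simp
        have hA : st0 = s0 := by
          rcases hcases with h | h
          · exact h
          · exfalso
            have htgt0 : G.tgt st0 = v := by rw [h, tgt_flip]
            cases p₂ with
            | nil =>
              have hl := hlast st0 (by simp)
              exact hvr (htgt0.symm.trans hl)
            | cons st1 p₂' =>
              have hchsuf : List.Chain'
                  (fun a b => G.tgt a = G.src b ∧ G.tsign a = !G.ssign b)
                  (st0 :: st1 :: p₂') := hch.suffix ⟨p₁, rfl⟩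
              have hrel := (List.chain'_cons'.mp hchsuf).1 st1 rfl
              have hsrc1 : G.src st1 = v := by rw [← hrel.1, htgt0]
              rcases Set.mem_insert_iff.mp (hedges st1 (by simp)) with h1e | h1e
              · -- nodup violated
                rw [List.map_append, List.map_cons, List.map_cons] at hnd
                have hnd2 := (List.nodup_append.mp hnd).2.1
                have := (List.nodup_cons.mp hnd2).1
                rw [h, h1e] at this
                exact this (List.mem_cons_self)
              · exact hsrc (hsrc1 ▸ (step_mem_verts h1e).1)
        subst hA
        rcases List.eq_nil_or_concat p₁ with rfl | ⟨q, sl, rfl⟩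
        · simp only [List.nil_append, List.head?_cons, Option.some.injEq] at hhead
          rw [← hhead, hss]
        · exfalso
          have hrel := (List.chain'_append.mp hch).2.2 sl (by simp) st0 rfl
          have htgtsl : G.tgt sl = v := by rw [hrel.1]
          rcases Set.mem_insert_iff.mp (hedges sl (by simp)) with h1e | h1e
          · rw [List.map_append] at hnd
            have hdisj := (List.nodup_append.mp hnd).2.2
            have m1 : st0.1 ∈ (q.concat sl).map Prod.fst :=
              h1e ▸ List.mem_map_of_mem (f := Prod.fst) (by simp)
            have m2 : st0.1 ∈ (st0 :: p₂).map Prod.fst :=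
              List.mem_map_of_mem (f := Prod.fst) (by simp)
            exact hdisj _ m1 _ m2 rfl
          · exact hsrc (htgtsl ▸ (step_mem_verts h1e).2)
      · refine hH.1.2.2 x p st' hdit ?_ hhead
        intro st'' hst''
        rcases Set.mem_insert_iff.mp (hedges st'' hst'') with h | h
        · exact absurd (h ▸ List.mem_map_of_mem (f := Prod.fst) hst'') hmem
        · exact h
    · -- all non-root vertices linear
      intro w hw hwr
      rcases Set.mem_insert_iff.mp hw with rfl | hwS
      · exact hlin
      · exact hH.2 w hwS hwr
  exact hsrc ((hmax K hcand).1 (Set.mem_insert v _))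

/-- every edge at `r` has both ends in `H` -/
lemma E1 (hH : H.IsLinearGroundCand α r)
    (hmax : ∀ K : G.Sub, K.IsLinearGroundCand α r → K.le H)
    (hsharp : G.SharpAt α r) :
    ∀ e : G.E, (G.fst e = r ∨ G.snd e = r) → (G.fst e ∈ H.verts ∧ G.snd e ∈ H.verts) := by
  have hrS : r ∈ H.verts := hH.1.1.1
  have main : ∀ st : G.Step, G.tgt st = r → G.src st ∈ H.verts := by
    intro st htr
    by_contra hy
    set y := G.src st with hyd
    have hyr : y ≠ r := fun hh => hy (hh ▸ hrS)
    have hadj : G.Adj y r := by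
      rcases st with ⟨e, d⟩
      cases d
      · exact ⟨e, Or.inr ⟨by simpa using htr, by simp [hyd]⟩⟩
      · exact ⟨e, Or.inl ⟨by simp [hyd], by simpa using htr⟩⟩
    have hlin := hsharp y hadj
    by_cases hs : G.ssign st = α
    · exact M1 hH hmax st hy (htr ▸ hrS) hs (Or.inl htr) hlin
    · have hs' : G.ssign st = !α := by
        cases hb : G.ssign st <;> cases α <;> simp_all
      have hd : G.IsDitrail [st] y r := by
        have h0 := ditrail_singleton (G := G) st
        rwa [← hyd, htr] at h0
      exact hlin.2 (hs' ▸ reachS_intro hd rfl)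
  intro e he
  rcases he with h | h
  · have := main (e, false) (by simpa using h)
    simp only [src_false] at this
    exact ⟨h ▸ hrS, this⟩
  · have := main (e, true) (by simpa using h)
    simp only [src_true] at this
    exact ⟨this, h ▸ hrS⟩

end BG

namespace BG
variable {V : Type} {G : BG V} {S : Set V} {r : V}

/-- underlying `G`-step of a step of the contraction -/
def stepVal (St : (G.contract S r).Step) : G.Step := (St.1.1, St.2)

lemma contract_fst_not {e : G.E} {he} (h : G.fst e ∉ S) :
    (G.contract S r).fst ⟨e, he⟩ = G.fst e := if_neg h
lemma contract_fst_mem {e : G.E} {he} (h : G.fst e ∈ S) :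
    (G.contract S r).fst ⟨e, he⟩ = r := if_pos h
lemma contract_snd_not {e : G.E} {he} (h : G.snd e ∉ S) :
    (G.contract S r).snd ⟨e, he⟩ = G.snd e := if_neg h
lemma contract_snd_mem {e : G.E} {he} (h : G.snd e ∈ S) :
    (G.contract S r).snd ⟨e, he⟩ = r := if_pos h

lemma csrc_not {St : (G.contract S r).Step} (h : G.src (stepVal St) ∉ S) :
    (G.contract S r).src St = G.src (stepVal St) := by
  rcases St with ⟨⟨e, he⟩, d⟩
  cases d
  · erw [src_false]; simp only [stepVal, src_false] at h ⊢; exact contract_snd_not h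
  · erw [src_true]; simp only [stepVal, src_true] at h ⊢; exact contract_fst_not h

lemma csrc_mem {St : (G.contract S r).Step} (h : G.src (stepVal St) ∈ S) :
    (G.contract S r).src St = r := by
  rcases St with ⟨⟨e, he⟩, d⟩
  cases d
  · erw [src_false]; simp only [stepVal, src_false] at h; exact contract_snd_mem h
  · erw [src_true]; simp only [stepVal, src_true] at h; exact contract_fst_mem h

lemma ctgt_not {St : (G.contract S r).Step} (h : G.tgt (stepVal St) ∉ S) :
    (G.contract S r).tgt St = G.tgt (stepVal St) := by
  rcases St with ⟨⟨e, he⟩, d⟩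
  cases d
  · erw [tgt_false]; simp only [stepVal, tgt_false] at h ⊢; exact contract_fst_not h
  · erw [tgt_true]; simp only [stepVal, tgt_true] at h ⊢; exact contract_snd_not h

lemma ctgt_mem {St : (G.contract S r).Step} (h : G.tgt (stepVal St) ∈ S) :
    (G.contract S r).tgt St = r := by
  rcases St with ⟨⟨e, he⟩, d⟩
  cases d
  · erw [tgt_false]; simp only [stepVal, tgt_false] at h; exact contract_fst_mem h
  · erw [tgt_true]; simp only [stepVal, tgt_true] at h; exact contract_snd_mem h

@[simp] lemma cssign (St : (G.contract S r).Step) :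
    (G.contract S r).ssign St = G.ssign (stepVal St) := by
  rcases St with ⟨⟨e, he⟩, d⟩; cases d <;> rfl

@[simp] lemma ctsign (St : (G.contract S r).Step) :
    (G.contract S r).tsign St = G.tsign (stepVal St) := by
  rcases St with ⟨⟨e, he⟩, d⟩; cases d <;> rfl

/-- if the source of a contracted step is the root, the underlying source lies in `S` -/
lemma csrc_r {St : (G.contract S r).Step} (hr : r ∈ S)
    (h : (G.contract S r).src St = r) : G.src (stepVal St) ∈ S := by
  by_contra hn
  rw [csrc_not hn] at h
  exact hn (h ▸ hr)

lemma ctgt_r {St : (G.contract S r).Step} (hr : r ∈ S)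
    (h : (G.contract S r).tgt St = r) : G.tgt (stepVal St) ∈ S := by
  by_contra hn
  rw [ctgt_not hn] at h
  exact hn (h ▸ hr)

lemma lift_exists : ∀ (q : List G.Step),
    (∀ st ∈ q, ¬(G.fst st.1 ∈ S ∧ G.snd st.1 ∈ S)) →
    ∃ Q : List (G.contract S r).Step, Q.map stepVal = q := by
  intro q hq
  induction q with
  | nil => exact ⟨[], rfl⟩
  | cons a t ih =>
    obtain ⟨Q, hQ⟩ := ih (fun st h => hq st (List.mem_cons_of_mem _ h))
    exact ⟨(⟨a.1, hq a (List.mem_cons_self)⟩, a.2) :: Q, by simp [hQ, stepVal]⟩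

lemma chain'_lift : ∀ (Q : List (G.contract S r).Step),
    List.Chain' (fun a b => G.tgt a = G.src b ∧ G.tsign a = !G.ssign b) (Q.map stepVal) →
    (∀ St ∈ Q, G.src (stepVal St) ∉ S) →
    List.Chain' (fun a b => (G.contract S r).tgt a = (G.contract S r).src b ∧
      (G.contract S r).tsign a = !(G.contract S r).ssign b) Q := by
  intro Q
  induction Q with
  | nil => intro _ _; simp
  | cons A T ih =>
    intro hch hmem
    cases T with
    | nil => simp
    | cons B T' =>
      rw [List.map_cons, List.map_cons, List.chain'_cons] at hch
      refine List.chain'_cons.mpr ⟨⟨?_, ?_⟩,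
        ih hch.2 (fun St h => hmem St (List.mem_cons_of_mem _ h))⟩
      · have hBs : G.src (stepVal B) ∉ S := hmem B (by simp)
        rw [csrc_not hBs, ctgt_not (by rw [hch.1.1]; exact hBs)]
        exact hch.1.1
      · rw [ctsign, cssign]; exact hch.1.2

/-- projecting a `G`-ditrail ending in `S`, with all sources outside `S`,
to a ditrail of the contraction ending at `r`. -/
lemma reach_contract {p : List G.Step} {x u : V} {a b : Bool}
    (hp : G.IsDitrail p x u) (hne : p ≠ [])
    (hsrc : ∀ st ∈ p, G.src st ∉ S) (hu : u ∈ S)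
    (ha : ∀ st, p.head? = some st → G.ssign st = a)
    (hb : ∀ st, p.getLast? = some st → G.tsign st = b) :
    (G.contract S r).Reach a b x r := by
  obtain ⟨h1, h2, h3, h4, h5⟩ := hp
  have hpred : ∀ st ∈ p, ¬(G.fst st.1 ∈ S ∧ G.snd st.1 ∈ S) := by
    intro st hst hboth
    rcases src_mem_ends st with h | h
    · exact hsrc st hst (by rw [h]; exact hboth.1)
    · exact hsrc st hst (by rw [h]; exact hboth.2)
  obtain ⟨Q, hQ⟩ := lift_exists (r := r) p hpred
  subst hQ
  have hmemQ : ∀ St ∈ Q, G.src (stepVal St) ∉ S :=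
    fun St hSt => hsrc _ (List.mem_map_of_mem (f := stepVal) hSt)
  have hQne : Q ≠ [] := fun h => hne (by rw [h]; rfl)
  have hnd : (Q.map Prod.fst).Nodup := by
    refine List.Nodup.of_map Subtype.val ?_
    have : (Q.map Prod.fst).map Subtype.val = (Q.map stepVal).map Prod.fst := by
      erw [List.map_map, List.map_map]; rfl
    rw [this]; exact h1
  have hhead : ∀ St, Q.head? = some St → (Q.map stepVal).head? = some (stepVal St) := by
    intro St h; rw [List.head?_map, h]; rfl
  have hlast : ∀ St, Q.getLast? = some St → (Q.map stepVal).getLast? = some (stepVal St) := by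
    intro St h; rw [List.getLast?_map, h]; rfl
  have hdit : (G.contract S r).IsDitrail Q x r := by
    refine ⟨hnd, chain'_lift Q h2 hmemQ, ?_, ?_, fun h => absurd h hQne⟩
    · intro St h
      have hx := h3 _ (hhead St h)
      have hsn : G.src (stepVal St) ∉ S :=
        hsrc _ (List.mem_map_of_mem (f := stepVal) (List.mem_of_mem_head? h))
      rw [csrc_not hsn]; exact hx
    · intro St h
      have hu' := h4 _ (hlast St h)
      exact ctgt_mem (by rw [hu']; exact hu)
  obtain ⟨A, T, rfl⟩ : ∃ A T, Q = A :: T := by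
    cases Q with
    | nil => exact absurd rfl hQne
    | cons A T => exact ⟨A, T, rfl⟩
  refine ⟨A :: T, hdit, fun st _ => Set.mem_univ _, Set.notMem_empty _,
    fun st _ => Set.notMem_empty _, ?_, ?_⟩
  · simp only [List.head?_cons, Option.map_some, Option.getD_some]
    rw [cssign]; exact ha _ (hhead A rfl)
  · rw [List.getLast?_eq_getLast (by simp : A :: T ≠ [])]
    simp only [Option.map_some, Option.getD_some]
    rw [ctsign]
    exact hb _ (hlast _ (List.getLast?_eq_getLast _))

end BG

namespace BG
variable {V : Type} {G : BG V} {α : Bool} {r : V} {H : G.Sub}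

/-- truncating a ditrail to `r` at its first visit to `H`: the arrival sign must be `!α`. -/
lemma truncGood (hH : H.IsLinearGroundCand α r)
    (hE1 : ∀ e : G.E, (G.fst e = r ∨ G.snd e = r) → (G.fst e ∈ H.verts ∧ G.snd e ∈ H.verts)) :
    ∀ (p : List G.Step) (x : V), G.IsDitrail p x r → x ∉ H.verts →
    ∃ (q : List G.Step) (u : V), q ≠ [] ∧ G.IsDitrail q x u ∧ u ∈ H.verts ∧
      q.head? = p.head? ∧ (∀ st' ∈ q, st' ∈ p) ∧ (∀ st ∈ q, G.src st ∉ H.verts) ∧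
      (∀ st, q.getLast? = some st → G.tsign st = !α) := by
  intro p
  induction p with
  | nil =>
    intro x hd hx
    exact absurd (by rw [ditrail_nil_eq hd]; exact hH.1.1.1) hx
  | cons st p' ih =>
    intro x hd hx
    have hsx : G.src st = x := hd.2.2.1 st rfl
    by_cases htS : G.tgt st ∈ H.verts
    · by_cases hts : G.tsign st = !α
      · refine ⟨[st], G.tgt st, by simp, ?_, htS, rfl, by simp, ?_, ?_⟩
        · have h0 := ditrail_singleton (G := G) st; rwa [hsx] at h0
        · intro st' h'; simp at h'; subst h'; rw [hsx]; exact hx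
        · intro st' h'; simp at h'; subst h'; exact hts
      · exfalso
        have hts' : G.tsign st = α := by cases hb : G.tsign st <;> cases α <;> simp_all
        by_cases hur : G.tgt st = r
        · have hor : G.fst st.1 = r ∨ G.snd st.1 = r := by
            rcases tgt_mem_ends st with h | h
            · exact Or.inl (by rw [← h]; exact hur)
            · exact Or.inr (by rw [← h]; exact hur)
          have hends := hE1 st.1 hor
          rcases src_mem_ends st with h | h
          · exact hx (by rw [← hsx, h]; exact hends.1)
          · exact hx (by rw [← hsx, h]; exact hends.2)
        · cases hp' : p' with
          | nil =>
            exact hur (hd.2.2.2.1 st (by rw [hp']; simp))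
          | cons a t =>
            have hne : p' ≠ [] := by rw [hp']; simp
            obtain ⟨hd2, hsgn⟩ := ditrail_tail hd hne
            have hsa : G.ssign a = !α := by
              have := hsgn a (by rw [hp']; rfl)
              rw [this, hts']
            have hre : G.ReachS (!α) (G.tgt st) r := by
              have hd3 : G.IsDitrail (a :: t) (G.tgt st) r := hp' ▸ hd2
              have h4 := reachS_intro hd3 (sth := a) rfl
              rwa [hsa] at h4
            exact (hH.2 _ htS hur).2 hre
    · have hne : p' ≠ [] := by
        intro h; subst h
        exact htS (by rw [hd.2.2.2.1 st (by simp)]; exact hH.1.1.1)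
      obtain ⟨hd2, hsgn⟩ := ditrail_tail hd hne
      obtain ⟨q, u, hqne, hqd, huS, hqh, hqsub, hqs, hql⟩ := ih (G.tgt st) hd2 htS
      have hndst : st.1 ∉ q.map Prod.fst := by
        intro hmem
        obtain ⟨st', hst', h'⟩ := List.mem_map.mp hmem
        have : st.1 ∉ p'.map Prod.fst := (List.nodup_cons.mp (by simpa using hd.1)).1
        exact this (h' ▸ List.mem_map_of_mem (f := Prod.fst) (hqsub st' hst'))
      refine ⟨st :: q, u, by simp, ?_, huS, by simp, ?_, ?_, ?_⟩
      · have hcons : G.IsDitrail (st :: q) (G.src st) u := by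
          refine ditrail_cons st hqd hndst ?_ (fun h => absurd h hqne)
          intro st' h'
          rw [hqh] at h'
          rw [hsgn st' h', Bool.not_not]
        rwa [hsx] at hcons
      · intro st' h'
        rcases List.mem_cons.mp h' with rfl | h'
        · exact List.mem_cons_self
        · exact List.mem_cons_of_mem _ (hqsub st' h')
      · intro st' h'
        rcases List.mem_cons.mp h' with rfl | h'
        · rw [hsx]; exact hx
        · exact hqs st' h'
      · intro st' h'
        cases q with
        | nil => exact absurd rfl hqne
        | cons b tq => exact hql st' (by rw [← h', List.getLast?_cons_cons])

lemma key1 (hH : H.IsLinearGroundCand α r)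
    (hE1 : ∀ e : G.E, (G.fst e = r ∨ G.snd e = r) → (G.fst e ∈ H.verts ∧ G.snd e ∈ H.verts))
    {v : V} {s β : Bool} (hv : v ∉ H.verts)
    (h : G.Reach s β v r) : (G.contract H.verts r).Reach s (!α) v r := by
  obtain ⟨p, hd, -, -, -, hs, -⟩ := h
  obtain ⟨q, u, hqne, hqd, huS, hqh, hqsub, hqs, hql⟩ := truncGood hH hE1 p v hd hv
  refine reach_contract hqd hqne hqs huS ?_ hql
  intro st h'
  rw [hqh] at h'
  rw [h'] at hs; simpa using hs

end BG

namespace BG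
variable {V : Type} {G : BG V} {α : Bool} {r : V} {H : G.Sub}

lemma bool_eq_or (a b : Bool) : a = b ∨ a = !b := by cases a <;> cases b <;> simp
lemma bool_ne_not (a : Bool) : ¬(a = !a) := by cases a <;> simp

lemma chain'_proj (hr : r ∈ H.verts) :
    ∀ (Q : List (G.contract H.verts r).Step),
    List.Chain' (fun a b => (G.contract H.verts r).tgt a = (G.contract H.verts r).src b ∧
      (G.contract H.verts r).tsign a = !(G.contract H.verts r).ssign b) Q →
    (∀ St ∈ Q.dropLast, G.tgt (stepVal St) ∉ H.verts) →
    List.Chain' (fun a b => G.tgt a = G.src b ∧ G.tsign a = !G.ssign b) (Q.map stepVal) := by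
  intro Q
  induction Q with
  | nil => intro _ _; simp
  | cons A T ih =>
    intro hch hmem
    cases T with
    | nil => simp
    | cons B T' =>
      rw [List.chain'_cons] at hch
      rw [List.map_cons, List.map_cons]
      have hA : G.tgt (stepVal A) ∉ H.verts := by
        refine hmem A ?_
        rw [List.dropLast_cons₂]
        exact List.mem_cons_self
      refine List.chain'_cons.mpr ⟨⟨?_, ?_⟩, ?_⟩
      · have h1 : (G.contract H.verts r).tgt A = G.tgt (stepVal A) := ctgt_not hA
        by_cases hB : G.src (stepVal B) ∈ H.verts
        · exfalso
          have h2 := csrc_mem hB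
          have h3 : G.tgt (stepVal A) = r := by rw [← h1, hch.1.1, h2]
          exact hA (h3 ▸ hr)
        · have h2 := csrc_not hB
          rw [← h1, ← h2]; exact hch.1.1
      · have := hch.1.2
        rwa [ctsign, cssign] at this
      · rw [← List.map_cons]
        refine ih hch.2 ?_
        intro St hSt
        refine hmem St ?_
        rw [List.dropLast_cons₂]
        exact List.mem_cons_of_mem _ hSt

/-- there is no nontrivial closed ditrail over the root of the contraction
leaving and arriving with sign `!α`. -/
lemma noNeg (hH : H.IsLinearGroundCand α r)
    (hE1 : ∀ e : G.E, (G.fst e = r ∨ G.snd e = r) → (G.fst e ∈ H.verts ∧ G.snd e ∈ H.verts)) :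
    ∀ (n : ℕ) (W : List (G.contract H.verts r).Step), W.length ≤ n → W ≠ [] →
    (W.map Prod.fst).Nodup →
    List.Chain' (fun a b => (G.contract H.verts r).tgt a = (G.contract H.verts r).src b ∧
      (G.contract H.verts r).tsign a = !(G.contract H.verts r).ssign b) W →
    (∀ St, W.head? = some St → (G.contract H.verts r).src St = r) →
    (∀ St, W.getLast? = some St → (G.contract H.verts r).tgt St = r) →
    (∀ St, W.head? = some St → (G.contract H.verts r).ssign St = !α) →
    (∀ St, W.getLast? = some St → (G.contract H.verts r).tsign St = !α) →
    False := by
  classical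
  have hr : r ∈ H.verts := hH.1.1.1
  intro n
  induction n with
  | zero =>
    intro W hlen hne _ _ _ _ _ _
    exact hne (List.eq_nil_of_length_eq_zero (Nat.le_zero.mp hlen))
  | succ n ih =>
    intro W hlen hne hnd hch hhd hlast hsh hsl
    set pf : (G.contract H.verts r).Step → Bool :=
      fun St => decide (G.tgt (stepVal St) ∉ H.verts) with hpf
    have hdne : W.dropWhile pf ≠ [] := by
      intro h0
      have hall : ∀ St ∈ W, pf St = true := List.dropWhile_eq_nil_iff.mp h0
      have hL : W.getLast? = some (W.getLast hne) := List.getLast?_eq_getLast _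
      have hmem : W.getLast hne ∈ W := List.getLast_mem hne
      have h1 : G.tgt (stepVal (W.getLast hne)) ∉ H.verts :=
        of_decide_eq_true (hall _ hmem)
      exact h1 (ctgt_r hr (hlast _ hL))
    obtain ⟨St0, R, hdrop⟩ : ∃ St0 R, W.dropWhile pf = St0 :: R := by
      cases h0 : W.dropWhile pf with
      | nil => exact absurd h0 hdne
      | cons a l => exact ⟨a, l, rfl⟩
    have hWD : W = (W.takeWhile pf ++ [St0]) ++ R := by
      rw [List.append_assoc, List.singleton_append, ← hdrop,
        List.takeWhile_append_dropWhile]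
    set T := W.takeWhile pf with hT
    set D := T ++ [St0] with hD
    have hDne : D ≠ [] := by simp [hD]
    have hTmem : ∀ St ∈ T, G.tgt (stepVal St) ∉ H.verts := by
      intro St hSt
      rw [hT] at hSt
      have h6 : pf St = true := List.mem_takeWhile_imp hSt
      rw [hpf] at h6
      exact of_decide_eq_true h6
    have hSt0S : G.tgt (stepVal St0) ∈ H.verts := by
      have h0 := List.head_dropWhile_not pf hdne
      have h2 : (W.dropWhile pf).head? = some St0 := by rw [hdrop]; rfl
      have h3 := List.head?_eq_head (l := W.dropWhile pf) hdne
      rw [h2] at h3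
      have h1 : (W.dropWhile pf).head hdne = St0 := (Option.some.inj h3).symm
      rw [h1] at h0
      exact not_not.mp (of_decide_eq_false h0)
    -- the lifted G-segment
    have hchD : List.Chain' (fun a b => (G.contract H.verts r).tgt a =
        (G.contract H.verts r).src b ∧ (G.contract H.verts r).tsign a =
        !(G.contract H.verts r).ssign b) D :=
      hch.prefix ⟨R, hWD.symm⟩
    have hGch := chain'_proj hr D hchD (by rw [hD, List.dropLast_concat]; exact hTmem)
    have hDlast : D.getLast? = some St0 := by rw [hD]; exact List.getLast?_concat
    have hheadW : W.head? = D.head? := by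
      rw [hWD, List.head?_append]
      cases h0 : D.head? with
      | some A => rfl
      | none => exact absurd (List.head?_eq_none_iff.mp h0) hDne
    obtain ⟨A, hA⟩ : ∃ A, D.head? = some A := ⟨D.head hDne, List.head?_eq_head _⟩
    have hAW : W.head? = some A := by rw [hheadW, hA]
    have haS : G.src (stepVal A) ∈ H.verts := csrc_r hr (hhd A hAW)
    set a := G.src (stepVal A) with ha
    set b := G.tgt (stepVal St0) with hb
    set GD := D.map stepVal with hGD
    have hGDne : GD ≠ [] := by
      rw [hGD]; exact fun h0 => hDne (List.map_eq_nil_iff.mp h0)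
    have hGDhead : GD.head? = some (stepVal A) := by
      rw [hGD, List.head?_map, hA]; rfl
    have hGDlast : GD.getLast? = some (stepVal St0) := by
      rw [hGD, List.getLast?_map, hDlast]; rfl
    have hndD : (GD.map Prod.fst).Nodup := by
      have h1 : (D.map Prod.fst).Nodup := by
        refine List.Nodup.sublist ?_ hnd
        refine List.Sublist.map Prod.fst ?_
        exact (List.IsPrefix.sublist ⟨R, hWD.symm⟩)
      have h2 : GD.map Prod.fst = (D.map Prod.fst).map Subtype.val := by
        rw [hGD]; erw [List.map_map, List.map_map]; rfl
      rw [h2]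
      exact h1.map (fun x y hxy => Subtype.ext hxy)
    have hGDd : G.IsDitrail GD a b := by
      refine ⟨hndD, hGch, ?_, ?_, fun h0 => absurd h0 hGDne⟩
      · intro st h0; rw [hGDhead] at h0
        cases h0; rfl
      · intro st h0; rw [hGDlast] at h0
        cases h0; rfl
    -- b cannot be r
    have hbr : b ≠ r := by
      intro h0
      rw [hb] at h0
      have hor : G.fst St0.1.1 = r ∨ G.snd St0.1.1 = r := by
        rcases tgt_mem_ends (stepVal St0) with h | h
        · exact Or.inl (h.symm.trans h0)
        · exact Or.inr (h.symm.trans h0)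
      exact St0.1.2 (hE1 St0.1.1 hor)
    -- reverse the segment and continue inside H : get a ditrail from b to r
    obtain ⟨hq, hqd, hqe, hqs⟩ := hpath hH haS
    have hrevd : G.IsDitrail (rev GD) b a := ditrail_rev hGDd
    have hdisj : List.Disjoint ((rev GD).map Prod.fst) (hq.map Prod.fst) := by
      intro edge hm1 hm2
      rw [rev_map_fst, List.mem_reverse] at hm1
      obtain ⟨St, hSt, hSte⟩ : ∃ St ∈ D, (stepVal St).1 = edge := by
        rw [hGD, List.map_map] at hm1
        obtain ⟨St, hSt, h'⟩ := List.mem_map.mp hm1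
        exact ⟨St, hSt, h'⟩
      obtain ⟨st', hst', hst'e⟩ := List.mem_map.mp hm2
      have he' : edge ∈ H.edges := hst'e ▸ hqe st' hst'
      have he2 : St.1.1 ∈ H.edges := by
        rw [show (St.1.1 : G.E) = edge from hSte]; exact he'
      exact St.1.2 ⟨H.fst_mem _ he2, H.snd_mem _ he2⟩
    have hcomb : G.IsDitrail (rev GD ++ hq) b r := by
      refine ditrail_append hrevd hqd hdisj ?_
      intro a' b' h1 h2
      rw [rev_getLast?, hGDhead] at h1
      cases h1
      rw [tsign_flip]
      have : G.ssign (stepVal A) = !α := by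
        have h3 := hsh A hAW
        rwa [cssign] at h3
      rw [this, hqs b' h2]
    have hcombh : (rev GD ++ hq).head? = some ((stepVal St0).1, !(stepVal St0).2) := by
      rw [List.head?_append, rev_head?, hGDlast]
      rfl
    have hreach := reachS_intro hcomb hcombh
    rw [ssign_flip] at hreach
    -- t must be α
    have htα : G.tsign (stepVal St0) = α := by
      rcases bool_eq_or (G.tsign (stepVal St0)) α with h0 | h0
      · exact h0
      · exact absurd (h0 ▸ hreach) (hH.2 b hSt0S hbr).2
    -- R cannot be empty
    by_cases hRnil : R = []
    · have hWlast : W.getLast? = some St0 := by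
        rw [hWD, hRnil, List.append_nil, List.getLast?_concat]
      have h4 := hsl St0 hWlast
      rw [ctsign, htα] at h4
      exact bool_ne_not α h4
    · have hRne : R ≠ [] := hRnil
      have hrel := (List.chain'_append.mp (hWD ▸ hch)).2.2 St0 hDlast
        (R.head hRne) (List.head?_eq_head _)
      have hheq : ∀ St, R.head? = some St → R.head hRne = St := by
        intro St h0
        have h2 := List.head?_eq_head hRne
        rw [h0] at h2
        exact (Option.some.inj h2).symm
      have hRhead : ∀ St, R.head? = some St → (G.contract H.verts r).src St = r := by
        intro St h0
        rw [← hheq St h0, ← hrel.1]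
        exact ctgt_mem hSt0S
      refine ih R ?_ hRne ?_ (hch.suffix ⟨D, hWD.symm⟩) hRhead ?_ ?_ ?_
      · have h5 := hlen
        rw [hWD, List.length_append, List.length_append] at h5
        simp only [List.length_singleton] at h5
        omega
      · rw [hWD, List.map_append] at hnd
        exact (List.nodup_append.mp hnd).2.1
      · intro St h0
        exact hlast St (by rw [hWD, List.getLast?_append, h0]; rfl)
      · intro St h0
        rw [← hheq St h0]
        have h3 := hrel.2
        rw [ctsign, htα] at h3
        rw [h3, Bool.not_not]
      · intro St h0
        exact hsl St (by rw [hWD, List.getLast?_append, h0]; rfl)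
  
end BG

theorem stmt18 {V : Type} {G : BG V} (α : Bool) (r : V)
    (hG : G.IsSemiradial α r) (hsharp : G.SharpAt α r)
    (H : G.Sub) (hH : H.IsLinearGroundCand α r)
    (hmax : ∀ K : G.Sub, K.IsLinearGroundCand α r → K.le H) :
    (∀ v ∈ H.vertsᶜ ∪ {r}, (G.contract H.verts r).Reach α (!α) v r) ∧
    ¬ (G.contract H.verts r).Reach (!α) (!α) r r ∧
    (G.contract H.verts r).RoundAt α r := by
  have hE1 := BG.E1 hH hmax hsharp
  have hrS : r ∈ H.verts := hH.1.1.1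
  refine ⟨?_, ?_, ?_⟩
  · -- radiality
    intro v hv
    rcases hv with hv | hv
    · obtain ⟨β, hreach⟩ := hG v
      exact BG.key1 hH hE1 hv hreach
    · rcases hv
      exact BG.reach_nil _ α r
  · -- sublinear root
    intro hcon
    obtain ⟨p, hd, -, -, -, hs, ht⟩ := hcon
    have hne : p ≠ [] := by
      intro h; subst h
      simp at hs
    obtain ⟨hnd, hch, hhd, hlast, -⟩ := hd
    refine BG.noNeg hH hE1 p.length p le_rfl hne hnd hch hhd hlast ?_ ?_
    · intro St h; rw [h] at hs; simpa using hs
    · intro St h; rw [h] at ht; simpa using ht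
  · -- roundness
    intro v hOpp
    obtain ⟨ee, hcase⟩ := hOpp
    rcases ee with ⟨e, he⟩
    rcases hcase with ⟨hf, hsn, hs1⟩ | ⟨hsn, hf, hs2⟩
    · -- fst-end at root
      have hfS : G.fst e ∈ H.verts := by
        by_contra h
        rw [BG.contract_fst_not h] at hf
        exact h (hf ▸ hrS)
      have hsS : G.snd e ∉ H.verts := fun h => he ⟨hfS, h⟩
      have hv : G.snd e = v := by rw [← hsn, BG.contract_snd_not hsS]
      have hvS : v ∉ H.verts := by rw [← hv]; exact hsS
      constructor
      · obtain ⟨β, hreach⟩ := hG v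
        exact BG.key1 hH hE1 hvS hreach
      · rcases BG.bool_eq_or (G.s2 e) (!α) with hs2' | hs2'
        · -- direct single step
          have hd : G.IsDitrail [(e, false)] v (G.fst e) := by
            have h0 := BG.ditrail_singleton (G := G) (e, false)
            rwa [BG.src_false, BG.tgt_false, hv] at h0
          refine BG.reach_contract hd (by simp) ?_ hfS ?_ ?_
          · intro st hst; simp at hst; subst hst
            rw [BG.src_false]; exact hsS
          · intro st hst; simp at hst; subst hst
            rw [BG.ssign_false]; exact hs2'
          · intro st hst; simp at hst; subst hst
            rw [BG.tsign_false]; exact hs1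
        · rw [Bool.not_not] at hs2'
          have hnl : ¬ G.LinearVtx α r v := by
            intro hl
            refine BG.M1 hH hmax (e, false) ?_ ?_ ?_ ?_ ?_
            · rw [BG.src_false]; exact hsS
            · rw [BG.tgt_false]; exact hfS
            · rw [BG.ssign_false]; exact hs2'
            · exact Or.inr (by rw [BG.tsign_false]; exact hs1)
            · rw [BG.src_false, hv]; exact hl
          have hra : G.ReachS (!α) v r := by
            by_contra hcon
            exact hnl ⟨hG v, hcon⟩
          obtain ⟨β, hreach⟩ := hra
          exact BG.key1 hH hE1 hvS hreach
    · -- snd-end at root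
      have hfS : G.snd e ∈ H.verts := by
        by_contra h
        rw [BG.contract_snd_not h] at hsn
        exact h (hsn ▸ hrS)
      have hsS : G.fst e ∉ H.verts := fun h => he ⟨h, hfS⟩
      have hv : G.fst e = v := by rw [← hf, BG.contract_fst_not hsS]
      have hvS : v ∉ H.verts := by rw [← hv]; exact hsS
      constructor
      · obtain ⟨β, hreach⟩ := hG v
        exact BG.key1 hH hE1 hvS hreach
      · rcases BG.bool_eq_or (G.s1 e) (!α) with hs1' | hs1'
        · have hd : G.IsDitrail [(e, true)] v (G.snd e) := by
            have h0 := BG.ditrail_singleton (G := G) (e, true)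
            rwa [BG.src_true, BG.tgt_true, hv] at h0
          refine BG.reach_contract hd (by simp) ?_ hfS ?_ ?_
          · intro st hst; simp at hst; subst hst
            rw [BG.src_true]; exact hsS
          · intro st hst; simp at hst; subst hst
            rw [BG.ssign_true]; exact hs1'
          · intro st hst; simp at hst; subst hst
            rw [BG.tsign_true]; exact hs2
        · rw [Bool.not_not] at hs1'
          have hnl : ¬ G.LinearVtx α r v := by
            intro hl
            refine BG.M1 hH hmax (e, true) ?_ ?_ ?_ ?_ ?_
            · rw [BG.src_true]; exact hsS
            · rw [BG.tgt_true]; exact hfS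
            · rw [BG.ssign_true]; exact hs1'
            · exact Or.inr (by rw [BG.tsign_true]; exact hs2)
            · rw [BG.src_true, hv]; exact hl
          have hra : G.ReachS (!α) v r := by
            by_contra hcon
            exact hnl ⟨hG v, hcon⟩
          obtain ⟨β, hreach⟩ := hra
          exact BG.key1 hH hE1 hvS hreach
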